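/- Let R be a commutative ring, A ∈ R^{n×n}, s < t ≤ n. Then adj(A^{(s+1)}_t) · A^{(s+1)}_t = δ_s^{t-s-1} δ_t · I, where A^{(s+1)}_t is the matrix of bordered (s+1)-minors of A restricted to indices s+1,…,t. -/

import Mathlib

/-!
This is Sylvester's determinant identity. Split `A` into blocks `P, B, C, D` with `δ = det P`.
Multiplying on the right by the block matrix `[[δ • 1, -adj P * B], [0, δ • 1]]` gives
`δ ^ |σ| * δ ^ |μ| * det A = δ ^ |σ| * δ * det (δ • D - C * adj P * B)`. When `δ` is
cancellable, the case of a single border row and column identifies the bordered minors with the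
entries of `δ • D - C * adj P * B`, and the general case then computes their determinant. For the
generic matrix over `ℤ[X_ij]` the corner minor `δ` is nonzero, hence cancellable, and the resulting
polynomial identity specializes to every commutative ring. Finally `adj M * M = det M • 1`.
-/

open Matrix

/-- determinant of the `k × k` submatrix of `A` obtained by bordering the
upper-left `(k-1) × (k-1)` block with row `i` and column `j`. -/
def borderedMinor {R : Type*} [CommRing R] {n : ℕ} (A : Matrix (Fin n) (Fin n) R)
    (k : ℕ) (i j : Fin n) : R :=
  (Matrix.of fun p q : Fin k =>
    A (if (p : ℕ) < k - 1 then ⟨p % n, Nat.mod_lt _ i.pos⟩ else i)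
      (if (q : ℕ) < k - 1 then ⟨q % n, Nat.mod_lt _ j.pos⟩ else j)).det

/-- `δ_k`: upper-left `k × k` corner minor. -/
def cornerMinor {R : Type*} [CommRing R] {n : ℕ} (A : Matrix (Fin n) (Fin n) R)
    (k : ℕ) (hk : k ≤ n) : R :=
  (A.submatrix (Fin.castLE hk) (Fin.castLE hk)).det

namespace Matrix

section Schur

variable {R : Type*} [CommRing R] {σ μ : Type*} [Fintype σ] [DecidableEq σ]
  [Fintype μ] [DecidableEq μ] (P : Matrix σ σ R) (B : Matrix σ μ R) (C : Matrix μ σ R)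
  (D : Matrix μ μ R)

theorem det_pow_mul_det_fromBlocks_eq :
    P.det ^ Fintype.card σ * (P.det ^ Fintype.card μ * (fromBlocks P B C D).det) =
      P.det ^ Fintype.card σ * (P.det * (P.det • D - C * P.adjugate * B).det) := by
  have hprod : fromBlocks P B C D * fromBlocks (P.det • 1) (-(P.adjugate * B)) 0 (P.det • 1) =
      fromBlocks (P.det • P) 0 (P.det • C) (P.det • D - C * P.adjugate * B) := by
    simp only [fromBlocks_multiply, Matrix.mul_neg, ← Matrix.mul_assoc, mul_adjugate,
      Matrix.mul_smul, Matrix.mul_one, Matrix.mul_zero, add_zero, smul_mul, Matrix.one_mul,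
      neg_add_cancel]
    congr 1; abel
  have hdet := congrArg det hprod
  rw [det_mul, det_fromBlocks_zero₂₁, det_fromBlocks_zero₁₂, det_smul, det_smul, det_smul,
    det_one, det_one, mul_one, mul_one] at hdet
  linear_combination hdet

theorem det_pow_mul_det_fromBlocks_of_isRegular (hP : IsRegular P.det) :
    P.det ^ Fintype.card μ * (fromBlocks P B C D).det =
      P.det * (P.det • D - C * P.adjugate * B).det :=
  (hP.pow _).left (det_pow_mul_det_fromBlocks_eq P B C D)

end Schur

section BorderedMinors

variable {R : Type*} [CommRing R] {σ μ : Type*} [Fintype σ] [DecidableEq σ]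

def borderedMinors (A : Matrix (σ ⊕ μ) (σ ⊕ μ) R) : Matrix μ μ R :=
  of fun i j => (A.submatrix (Sum.map id fun _ : Fin 1 => i) (Sum.map id fun _ : Fin 1 => j)).det

theorem borderedMinors_map {S : Type*} [CommRing S] (A : Matrix (σ ⊕ μ) (σ ⊕ μ) R)
    (f : R →+* S) : (A.map f).borderedMinors = A.borderedMinors.map f := by
  ext i j
  simp only [borderedMinors, of_apply, map_apply, RingHom.map_det, RingHom.mapMatrix_apply,
    submatrix_map]

theorem borderedMinors_eq_of_isRegular (A : Matrix (σ ⊕ μ) (σ ⊕ μ) R)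
    (hA : IsRegular A.toBlocks₁₁.det) :
    A.borderedMinors =
      A.toBlocks₁₁.det • A.toBlocks₂₂ - A.toBlocks₂₁ * A.toBlocks₁₁.adjugate * A.toBlocks₁₂ := by
  ext i j
  let B := A.toBlocks₁₂.submatrix id fun _ : Fin 1 => j
  let C := A.toBlocks₂₁.submatrix (fun _ : Fin 1 => i) id
  let D := A.toBlocks₂₂.submatrix (fun _ : Fin 1 => i) fun _ : Fin 1 => j
  have hblocks : A.submatrix (Sum.map id fun _ : Fin 1 => i) (Sum.map id fun _ : Fin 1 => j) =
      fromBlocks A.toBlocks₁₁ B C D := by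
    ext (p | p) (q | q) <;> rfl
  have h := det_pow_mul_det_fromBlocks_of_isRegular A.toBlocks₁₁ B C D hA
  rw [← hblocks, Fintype.card_fin, pow_one] at h
  rw [borderedMinors, of_apply, hA.left h, det_unique]
  simp [B, C, D, mul_apply]

theorem det_toBlocks₁₁_mvPolynomialX_ne_zero :
    (mvPolynomialX (σ ⊕ μ) (σ ⊕ μ) ℤ).toBlocks₁₁.det ≠ 0 := by
  let f := MvPolynomial.rename (R := ℤ) (Prod.map (Sum.inl : σ → σ ⊕ μ) (Sum.inl : σ → σ ⊕ μ))
  have hf : Function.Injective f := MvPolynomial.rename_injective _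
    (Sum.inl_injective.prodMap Sum.inl_injective)
  have h : (mvPolynomialX (σ ⊕ μ) (σ ⊕ μ) ℤ).toBlocks₁₁ = f.mapMatrix (mvPolynomialX σ σ ℤ) := by
    ext i j
    simp [f, toBlocks₁₁]
  rw [h, ← AlgHom.map_det]
  exact (map_ne_zero_iff f hf).2 (det_mvPolynomialX_ne_zero σ ℤ)

variable [Fintype μ] [DecidableEq μ] [Nonempty μ]

theorem det_borderedMinors_of_isRegular (A : Matrix (σ ⊕ μ) (σ ⊕ μ) R)
    (hA : IsRegular A.toBlocks₁₁.det) :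
    A.borderedMinors.det = A.toBlocks₁₁.det ^ (Fintype.card μ - 1) * A.det := by
  have h := det_pow_mul_det_fromBlocks_of_isRegular A.toBlocks₁₁ A.toBlocks₁₂ A.toBlocks₂₁
    A.toBlocks₂₂ hA
  rw [fromBlocks_toBlocks, ← Nat.sub_add_cancel (Fintype.card_pos (α := μ)), pow_succ] at h
  refine hA.left ?_
  simp only [borderedMinors_eq_of_isRegular A hA, ← h]
  ring

theorem det_borderedMinors (A : Matrix (σ ⊕ μ) (σ ⊕ μ) R) :
    A.borderedMinors.det = A.toBlocks₁₁.det ^ (Fintype.card μ - 1) * A.det := by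
  let φ := MvPolynomial.eval₂Hom (Int.castRingHom R) fun p : (σ ⊕ μ) × (σ ⊕ μ) => A p.1 p.2
  have hφ : (mvPolynomialX (σ ⊕ μ) (σ ⊕ μ) ℤ).map φ = A := mvPolynomialX_map_eval₂ _ A
  have hφ₁₁ : (mvPolynomialX (σ ⊕ μ) (σ ⊕ μ) ℤ).toBlocks₁₁.map φ = A.toBlocks₁₁ := by
    rw [← hφ]; rfl
  have h := congrArg φ (det_borderedMinors_of_isRegular _
    (IsRegular.of_ne_zero det_toBlocks₁₁_mvPolynomialX_ne_zero))
  rwa [map_mul, map_pow, RingHom.map_det, RingHom.map_det, RingHom.map_det,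
    RingHom.mapMatrix_apply, RingHom.mapMatrix_apply, RingHom.mapMatrix_apply,
    ← borderedMinors_map, hφ, hφ₁₁] at h

end BorderedMinors

end Matrix

theorem borderedMinor_succ_eq_borderedMinors {R : Type*} [CommRing R] {n s : ℕ} {μ : Type*}
    (A : Matrix (Fin n) (Fin n) R) (hs : s ≤ n) (e : Fin s ⊕ μ → Fin n) (he : ∀ p, e (Sum.inl p) = Fin.castLE hs p) (i j : μ) :
    borderedMinor A (s + 1) (e (Sum.inr i)) (e (Sum.inr j)) =
      (A.submatrix e e).borderedMinors i j := by
  have hmod (p : Fin s) : (p : ℕ) % n = p := Nat.mod_eq_of_lt (p.isLt.trans_le hs)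
  rw [borderedMinor, borderedMinors, of_apply, ← det_submatrix_equiv_self finSumFinEquiv]
  congr 1
  ext (p | p) (q | q) <;> simp [he, hmod, Fin.castLE]

/-- `adj(A^{(s+1)}_t) · A^{(s+1)}_t = δ_s^{t-s-1} δ_t · I`, where
`A^{(s+1)}_t` is the matrix of bordered `(s+1)`-minors of `A` with border
indices running over `s+1, …, t` (0-based: `s, …, t-1`). -/
theorem adjugate_mul_borderedMinorMatrix {R : Type*} [CommRing R] {n s t : ℕ}
    (A : Matrix (Fin n) (Fin n) R) (hst : s < t) (htn : t ≤ n) :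
    let M : Matrix (Fin (t - s)) (Fin (t - s)) R :=
      Matrix.of fun i j => borderedMinor A (s + 1)
        ⟨s + i, by have := i.isLt; omega⟩ ⟨s + j, by have := j.isLt; omega⟩
    M.adjugate * M
      = (cornerMinor A s (by omega) ^ (t - s - 1) * cornerMinor A t htn) • 1 := by
  intro M
  have : Nonempty (Fin (t - s)) := ⟨⟨0, by omega⟩⟩
  let e : Fin s ⊕ Fin (t - s) ≃ Fin t := finSumFinEquiv.trans (finCongr (by omega))
  let A' := (A.submatrix (Fin.castLE htn) (Fin.castLE htn)).submatrix e e
  have hM : M = A'.borderedMinors := by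
    ext i j
    exact borderedMinor_succ_eq_borderedMinors A (by omega) (Fin.castLE htn ∘ e)
      (fun _ => rfl) i j
  have hs : A'.toBlocks₁₁.det = cornerMinor A s (by omega) := rfl
  have ht : A'.det = cornerMinor A t htn := det_submatrix_equiv_self e _
  rw [adjugate_mul, hM, det_borderedMinors, Fintype.card_fin, hs, ht]
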